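/- arXiv:1406.1323 — 4 statements merged into one kernel-verified Lean document; each statement's English description precedes it below -/
import Mathlib

section
/- Let R be a commutative Noetherian ring, M an R-module, and s a non-negative integer. If M is in dimension < s (i.e., there exists a finitely generated submodule N ⊆ M with dim Supp(M/N) < s), then for every prime ideal p of R with dim(R/p) ≥ s, the localization M_p is a finitely generated R_p-module. -/
open CategoryTheory

universe u

/-- Carrier of the `i`-th local cohomology module `H^i_a(M)` with support in `V(a)`. -/
noncomputable def locH (R : Type u) [CommRing R] (a : Ideal R) (i : ℕ)
    (M : Type u) [AddCommGroup M] [Module R M] : ModuleCat R :=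
  (localCohomology a i).obj (ModuleCat.of R M)

/-- Krull dimension of the support of a module. -/
noncomputable def dimSupp (R : Type u) [CommRing R]
    (M : Type u) [AddCommGroup M] [Module R M] : WithBot ℕ∞ :=
  Order.krullDim (Module.support R M)

/-- `f_a^b(M) = inf{i : b^n H^i_a(M) ≠ 0 for all n}`, the `b`-finiteness dimension
of `M` relative to `a` (`inf ∅ = ⊤`). -/
noncomputable def fab (R : Type u) [CommRing R] (a b : Ideal R)
    (M : Type u) [AddCommGroup M] [Module R M] : ℕ∞ :=
  sInf ((↑) '' {i : ℕ |
    ∀ n : ℕ, b ^ n • (⊤ : Submodule R (locH R a i M)) ≠ ⊥})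

/-- `f_a^b(M)_n = inf{i : dim Supp (b^t H^i_a(M)) ≥ n for all t}`. -/
noncomputable def fabn (R : Type u) [CommRing R] (a b : Ideal R)
    (M : Type u) [AddCommGroup M] [Module R M] (n : ℕ) : ℕ∞ :=
  sInf ((↑) '' {i : ℕ |
    ∀ t : ℕ, (n : WithBot ℕ∞) ≤ dimSupp R ↥(b ^ t • (⊤ : Submodule R (locH R a i M)))})

/-- `f_a^b(M)^n = inf{f_{aR_p}^{bR_p}(M_p) : p ∈ Spec R, dim R/p ≥ n}`. -/
noncomputable def fabUpper (R : Type u) [CommRing R] (a b : Ideal R)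
    (M : Type u) [AddCommGroup M] [Module R M] (n : ℕ) : ℕ∞ :=
  sInf {d : ℕ∞ | ∃ p : PrimeSpectrum R, (n : WithBot ℕ∞) ≤ ringKrullDim (R ⧸ p.asIdeal) ∧
    d = fab (Localization.AtPrime p.asIdeal)
      (a.map (algebraMap R (Localization.AtPrime p.asIdeal)))
      (b.map (algebraMap R (Localization.AtPrime p.asIdeal)))
      (LocalizedModule p.asIdeal.primeCompl M)}

/-- `f_a(M) = inf{i : H^i_a(M) is not finitely generated}`, the finiteness dimension. -/
noncomputable def finDim (R : Type u) [CommRing R] (a : Ideal R)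
    (M : Type u) [AddCommGroup M] [Module R M] : ℕ∞ :=
  sInf ((↑) '' {i : ℕ | ¬ Module.Finite R (locH R a i M)})

/-- The `i`-th Ext module `Ext^i_R(N, N')`. -/
noncomputable def extMod (R : Type u) [CommRing R] (i : ℕ)
    (N : Type u) [AddCommGroup N] [Module R N]
    (N' : Type u) [AddCommGroup N'] [Module R N'] : ModuleCat R :=
  ((Ext R (ModuleCat.{u} R) i).obj (Opposite.op (ModuleCat.of R N))).obj (ModuleCat.of R N')

/-- `N` is `b`-cofinite: `Supp N ⊆ V(b)` and `Ext^i_R(R/b, N)` is finitely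
generated for all `i ≥ 0`. -/
def IsCofinite (R : Type u) [CommRing R] (b : Ideal R)
    (N : Type u) [AddCommGroup N] [Module R N] : Prop :=
  Module.support R N ⊆ PrimeSpectrum.zeroLocus (b : Set R) ∧
    ∀ i : ℕ, Module.Finite R (extMod R i (R ⧸ b) N)

/-- `c_a^b(M) = inf{i : H^i_a(M) is not b-cofinite}`, the `b`-cofiniteness dimension. -/
noncomputable def cofDim (R : Type u) [CommRing R] (a b : Ideal R)
    (M : Type u) [AddCommGroup M] [Module R M] : ℕ∞ :=
  sInf ((↑) '' {i : ℕ | ¬ IsCofinite R b (locH R a i M)})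

/-- `depth(b, M)`: the supremum of lengths of `M`-regular sequences contained in `b`
(the common length of maximal `M`-regular sequences in `b`). -/
noncomputable def mdepth (R : Type u) [CommRing R] (b : Ideal R)
    (M : Type u) [AddCommGroup M] [Module R M] : ℕ∞ :=
  sSup {d : ℕ∞ | ∃ rs : List R, d = rs.length ∧ (∀ r ∈ rs, r ∈ b) ∧
    RingTheory.Sequence.IsRegular M rs}

/-- `f_a^n(M) = inf{f_{aR_p}(M_p) : p ∈ Supp(M/aM), dim R/p ≥ n}`. -/
noncomputable def fan (R : Type u) [CommRing R] (a : Ideal R)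
    (M : Type u) [AddCommGroup M] [Module R M] (n : ℕ) : ℕ∞ :=
  sInf {d : ℕ∞ | ∃ p : PrimeSpectrum R,
    p ∈ Module.support R (M ⧸ (a • ⊤ : Submodule R M)) ∧
    (n : WithBot ℕ∞) ≤ ringKrullDim (R ⧸ p.asIdeal) ∧
    d = finDim (Localization.AtPrime p.asIdeal)
      (a.map (algebraMap R (Localization.AtPrime p.asIdeal)))
      (LocalizedModule p.asIdeal.primeCompl M)}

/-- `M` is in dimension `< n`: there is a finitely generated submodule `N ⊆ M`
with `dim Supp (M/N) < n`. -/
def InDimLT (R : Type u) [CommRing R] (n : ℕ)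
    (M : Type u) [AddCommGroup M] [Module R M] : Prop :=
  ∃ N : Submodule R M, N.FG ∧ dimSupp R (M ⧸ N) < (n : WithBot ℕ∞)


lemma aux_finite_localized {R : Type u} [CommRing R]
    {M : Type u} [AddCommGroup M] [Module R M] (N : Submodule R M) (hN : N.FG)
    (S : Submonoid R)
    (h : Subsingleton (LocalizedModule S (M ⧸ N))) :
    Module.Finite (Localization S) (LocalizedModule S M) := by
  obtain ⟨T, hT⟩ := hN
  rw [Module.finite_def, Submodule.fg_def]
  refine ⟨(LocalizedModule.mkLinearMap S M) '' T, (T.finite_toSet).image _, ?_⟩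
  rw [eq_top_iff]
  rintro x -
  induction x using LocalizedModule.induction_on with
  | h m u =>
    have hker := LocalizedModule.subsingleton_iff.mp h (Submodule.Quotient.mk m)
    obtain ⟨r, hrS, hr⟩ := hker
    rw [← Submodule.Quotient.mk_smul, Submodule.Quotient.mk_eq_zero] at hr
    have hmem : LocalizedModule.mkLinearMap S M (r • m) ∈
        Submodule.span (Localization S) ((LocalizedModule.mkLinearMap S M) '' ↑T) := by
      apply Submodule.span_le_restrictScalars R (Localization S)
      have : LocalizedModule.mkLinearMap S M (r • m) ∈
          Submodule.span R ((LocalizedModule.mkLinearMap S M) '' ↑T) := by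
        rw [← Submodule.map_span, hT]
        exact Submodule.mem_map_of_mem hr
      exact this
    have key : LocalizedModule.mk m u =
        Localization.mk 1 (⟨r, hrS⟩ * u) • LocalizedModule.mkLinearMap S M (r • m) := by
      show LocalizedModule.mk m u = Localization.mk 1 (⟨r, hrS⟩ * u) • LocalizedModule.mk (r • m) 1
      rw [LocalizedModule.mk_smul_mk, one_smul, mul_one, LocalizedModule.mk_eq]
      exact ⟨1, by simp [mul_smul, mul_comm]⟩
    rw [key]
    exact Submodule.smul_mem _ _ hmem


lemma aux_dim_le {R : Type u} [CommRing R]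
    {M : Type u} [AddCommGroup M] [Module R M] {p : PrimeSpectrum R}
    (hp : p ∈ Module.support R M) :
    ringKrullDim (R ⧸ p.asIdeal) ≤ Order.krullDim (Module.support R M) := by
  have hmem : ∀ q : PrimeSpectrum (R ⧸ p.asIdeal),
      PrimeSpectrum.comap (Ideal.Quotient.mk p.asIdeal) q ∈ Module.support R M := by
    intro q
    apply Module.stableUnderSpecialization_support _ hp
    rw [← PrimeSpectrum.le_iff_specializes]
    show p.asIdeal ≤ Ideal.comap _ q.asIdeal
    intro x hx
    simp [Ideal.mem_comap, Ideal.Quotient.eq_zero_iff_mem.mpr hx]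
  let f : PrimeSpectrum (R ⧸ p.asIdeal) → (Module.support R M) :=
    fun q => ⟨PrimeSpectrum.comap (Ideal.Quotient.mk p.asIdeal) q, hmem q⟩
  have hsm : StrictMono f := by
    have hmono : Monotone f := fun a b hab => Ideal.comap_mono hab
    have hinj : Function.Injective f := by
      intro a b hab
      exact PrimeSpectrum.comap_injective_of_surjective _
        Ideal.Quotient.mk_surjective (congrArg Subtype.val hab)
    exact hmono.strictMono_of_injective hinj
  exact Order.krullDim_le_of_strictMono f hsm

/-- if `M` is in dimension `< s`, then `M_p` is a finitely generated
`R_p`-module for every prime `p` with `dim R/p ≥ s`. -/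
theorem localized_finite_of_inDimLT (R : Type u) [CommRing R] [IsNoetherianRing R]
    (M : Type u) [AddCommGroup M] [Module R M] (s : ℕ)
    (h : InDimLT R s M) (p : PrimeSpectrum R)
    (hp : (s : WithBot ℕ∞) ≤ ringKrullDim (R ⧸ p.asIdeal)) :
    Module.Finite (Localization.AtPrime p.asIdeal)
      (LocalizedModule p.asIdeal.primeCompl M) := by
  
  obtain ⟨N, hNfg, hdim⟩ := h
  have hns : p ∉ Module.support R (M ⧸ N) := by
    intro hmem
    have h1 := aux_dim_le hmem
    have : ringKrullDim (R ⧸ p.asIdeal) < (s : WithBot ℕ∞) :=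
      lt_of_le_of_lt h1 hdim
    exact absurd hp (not_le_of_gt this)
  exact aux_finite_localized N hNfg _ (Module.notMem_support_iff.mp hns)
end

section
/- Let R be a commutative Noetherian ring, M an R-module, and s a non-negative integer. If M is in dimension < s, then the set (Ass_R M)_{≥ s} = {p ∈ Ass_R M : dim R/p ≥ s} is finite. -/
open CategoryTheory

universe u

/-!
Choose `N` finitely generated with `dim Supp (M/N) < s`. An associated prime of `M` is associated
to `N` or to `M/N`, and an associated prime `p` of `M/N` has `V(p) ⊆ Supp (M/N)`, hence
`dim R/p < s`. So `(Ass M)_{≥ s} ⊆ Ass N`, which is finite because `N` is finitely generated.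
-/

theorem IsAssociatedPrime.ringKrullDim_quotient_le_supportDim {R M : Type*} [CommRing R]
    [AddCommGroup M] [Module R M] {p : Ideal R} (hp : IsAssociatedPrime p M) :
    ringKrullDim (R ⧸ p) ≤ Module.supportDim R M := by
  obtain ⟨-, x, rfl⟩ := hp
  rw [ringKrullDim_quotient]
  refine Order.krullDim_le_of_strictMono (fun q ↦ ⟨q.1, ?_⟩) fun _ _ h ↦ h
  rw [Module.mem_support_iff_exists_annihilator]
  refine ⟨x, fun r hr ↦ q.2 (Ideal.le_radical ?_)⟩
  simpa [Submodule.mem_colon_singleton, Submodule.mem_annihilator_span_singleton] using hr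

theorem associatedPrimes_subset_of_supportDim_quotient_lt {R M : Type*} [CommRing R]
    [AddCommGroup M] [Module R M] (N : Submodule R M) :
    {p ∈ associatedPrimes R M | Module.supportDim R (M ⧸ N) < ringKrullDim (R ⧸ p)} ⊆
      associatedPrimes R N := by
  rintro p ⟨hpM, hdim⟩
  rcases associatedPrimes.subset_union_of_exact N.injective_subtype
    (LinearMap.exact_subtype_mkQ N) hpM with hpN | hpQ
  · exact hpN
  · exact absurd hdim (not_lt.mpr hpQ.ringKrullDim_quotient_le_supportDim)

/-- if `M` is in dimension `< s`, then `(Ass_R M)_{≥ s}` is finite. -/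
theorem assPrimes_ge_finite_of_inDimLT (R : Type u) [CommRing R] [IsNoetherianRing R]
    (M : Type u) [AddCommGroup M] [Module R M] (s : ℕ)
    (h : InDimLT R s M) :
    {p ∈ associatedPrimes R M | (s : WithBot ℕ∞) ≤ ringKrullDim (R ⧸ p)}.Finite := by
  obtain ⟨N, hN, hdim⟩ := h
  have : Module.Finite R N := Module.Finite.iff_fg.mpr hN
  exact (associatedPrimes.finite R N).subset fun p hp ↦
    associatedPrimes_subset_of_supportDim_quotient_lt N ⟨hp.1, hdim.trans_le hp.2⟩
end

section
/- Let R be a commutative Noetherian ring and n a non-negative integer. The class of R-modules that are in dimension < n forms a Serre subcategory of the category of R-modules: it is closed under submodules, quotient modules, and extensions. -/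
open CategoryTheory

universe u

/-!
Pulling back a witness `K ⊆ N` along `M ↪ N` gives a witness for `M` (finitely generated since
`R` is noetherian), and pushing it forward along `M ↠ N` gives one for `N`. For an extension
`M → N → P → 0`, take witnesses `K ⊆ M`, `Q ⊆ P`, lift `Q` to a finitely generated `L ⊆ N`; then
`N ⧸ (f K ⊔ L)` is the middle term of an exact sequence `M ⧸ K → N ⧸ (f K ⊔ L) → P ⧸ Q`. Its
support lies in the union of the outer supports, and since supports are closed under
specialization, a chain of primes in that union lies entirely in one of them, so the dimension
is at most the larger of the two.
-/

open Order in
lemma LTSeries.length_le_krullDim_of_head_mem {α : Type*} [Preorder α] {s u : Set α}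
    (hs : IsUpperSet s) (p : LTSeries u) (hp : (p.head : α) ∈ s) :
    (p.length : WithBot ℕ∞) ≤ krullDim s :=
  LTSeries.length_le_krullDim
    ⟨p.length, fun i => ⟨p i, hs (p.monotone (Fin.zero_le i)) hp⟩, p.step⟩

lemma Order.krullDim_le_max_of_subset_union {α : Type*} [Preorder α] {s t u : Set α}
    (hs : IsUpperSet s) (ht : IsUpperSet t) (hu : u ⊆ s ∪ t) :
    krullDim u ≤ max (krullDim s) (krullDim t) :=
  iSup_le fun p => (hu p.head.2).elim
    (fun h => le_max_of_le_left (p.length_le_krullDim_of_head_mem hs h))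
    (fun h => le_max_of_le_right (p.length_le_krullDim_of_head_mem ht h))

namespace Module

variable {R : Type*} [CommRing R] {M N P : Type*} [AddCommGroup M] [Module R M]
  [AddCommGroup N] [Module R N] [AddCommGroup P] [Module R P]

lemma isUpperSet_support : IsUpperSet (support R M) :=
  fun _ _ hpq hp => mem_support_mono hpq hp

lemma support_subset_union_of_exact {f : M →ₗ[R] N} {g : N →ₗ[R] P} (h : Function.Exact f g) :
    support R N ⊆ support R M ∪ support R P := by
  rw [support_of_exact h.linearMap_rangeRestrict (LinearMap.range f).injective_subtype
    g.surjective_rangeRestrict]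
  exact Set.union_subset_union (support_subset_of_surjective _ f.surjective_rangeRestrict)
    (support_subset_of_injective _ (LinearMap.range g).injective_subtype)

lemma supportDim_le_max_of_exact {f : M →ₗ[R] N} {g : N →ₗ[R] P} (h : Function.Exact f g) :
    supportDim R N ≤ max (supportDim R M) (supportDim R P) :=
  Order.krullDim_le_max_of_subset_union isUpperSet_support isUpperSet_support
    (support_subset_union_of_exact h)

end Module

namespace Submodule

variable {R : Type*} [CommRing R] {M N P : Type*} [AddCommGroup M] [Module R M]
  [AddCommGroup N] [Module R N] [AddCommGroup P] [Module R P]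

lemma FG.exists_fg_map_eq {g : N →ₗ[R] P} (hg : Function.Surjective g) {Q : Submodule R P}
    (hQ : Q.FG) : ∃ L : Submodule R N, L.FG ∧ L.map g = Q := by
  obtain ⟨S, rfl⟩ := hQ
  refine ⟨span R (Function.surjInv hg '' S), fg_span (S.finite_toSet.image _), ?_⟩
  rw [map_span, Set.image_image]
  simp only [Function.surjInv_eq hg, Set.image_id']

lemma mapQ_injective_comap (K : Submodule R N) (f : M →ₗ[R] N) :
    Function.Injective ((K.comap f).mapQ K f le_rfl) := by
  rw [← LinearMap.ker_eq_bot, ker_mapQ, mkQ_map_self]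

lemma mapQ_surjective_map (K : Submodule R M) {f : M →ₗ[R] N} (hf : Function.Surjective f) :
    Function.Surjective (K.mapQ (K.map f) f (le_comap_map f K)) := by
  rw [← LinearMap.range_eq_top, range_mapQ, LinearMap.range_eq_top.mpr hf, map_top, range_mkQ]

lemma exact_mapQ_sup_map {f : M →ₗ[R] N} {g : N →ₗ[R] P} (h : Function.Exact f g)
    (K : Submodule R M) (L : Submodule R N) (h₁ : K ≤ (K.map f ⊔ L).comap f)
    (h₂ : K.map f ⊔ L ≤ (L.map g).comap g) :
    Function.Exact (K.mapQ _ f h₁) ((K.map f ⊔ L).mapQ _ g h₂) := by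
  have hL : L.map (K.map f ⊔ L).mkQ = ⊥ := by
    rw [eq_bot_iff, map_le_iff_le_comap, comap_bot, ker_mkQ]
    exact le_sup_right
  rw [LinearMap.exact_iff, ker_mapQ, range_mapQ, comap_map_eq, h.linearMap_ker_eq, map_sup, hL,
    bot_sup_eq]

end Submodule

namespace InDimLT

variable {R : Type u} [CommRing R] {n : ℕ} {M N P : Type u} [AddCommGroup M] [Module R M]
  [AddCommGroup N] [Module R N] [AddCommGroup P] [Module R P]

lemma of_injective [IsNoetherianRing R] (f : M →ₗ[R] N) (hf : Function.Injective f)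
    (hN : InDimLT R n N) : InDimLT R n M := by
  obtain ⟨K, hK, hdim⟩ := hN
  exact ⟨K.comap f, Submodule.fg_of_fg_map_injective f hf (hK.of_le (K.map_comap_le f)),
    (Module.supportDim_le_of_injective _ (K.mapQ_injective_comap f)).trans_lt hdim⟩

lemma of_surjective (f : M →ₗ[R] N) (hf : Function.Surjective f) (hM : InDimLT R n M) :
    InDimLT R n N := by
  obtain ⟨K, hK, hdim⟩ := hM
  exact ⟨K.map f, hK.map f,
    (Module.supportDim_le_of_surjective _ (K.mapQ_surjective_map hf)).trans_lt hdim⟩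

lemma of_exact {f : M →ₗ[R] N} {g : N →ₗ[R] P} (h : Function.Exact f g)
    (hg : Function.Surjective g) (hM : InDimLT R n M) (hP : InDimLT R n P) : InDimLT R n N := by
  obtain ⟨K, hK, hdimK⟩ := hM
  obtain ⟨Q, hQ, hdimQ⟩ := hP
  obtain ⟨L, hL, rfl⟩ := hQ.exists_fg_map_eq hg
  have h₁ : K ≤ (K.map f ⊔ L).comap f :=
    (K.le_comap_map f).trans (Submodule.comap_mono le_sup_left)
  have h₂ : K.map f ⊔ L ≤ (L.map g).comap g := by
    refine sup_le ?_ (L.le_comap_map g)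
    rintro _ ⟨x, -, rfl⟩
    exact Submodule.mem_comap.mpr (h.apply_apply_eq_zero x ▸ zero_mem _)
  exact ⟨K.map f ⊔ L, (hK.map f).sup hL,
    (Module.supportDim_le_max_of_exact (Submodule.exact_mapQ_sup_map h K L h₁ h₂)).trans_lt
      (max_lt hdimK hdimQ)⟩

end InDimLT

/-- the class of modules in dimension `< n` is a Serre subcategory:
closed under submodules, quotients, and extensions. -/
theorem inDimLT_serre (R : Type u) [CommRing R] [IsNoetherianRing R] (n : ℕ) :
    (∀ (M : Type u) [AddCommGroup M] [Module R M] (N : Submodule R M),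
      InDimLT R n M → InDimLT R n N) ∧
    (∀ (M : Type u) [AddCommGroup M] [Module R M] (N : Submodule R M),
      InDimLT R n M → InDimLT R n (M ⧸ N)) ∧
    (∀ (M : Type u) [AddCommGroup M] [Module R M] (N : Submodule R M),
      InDimLT R n N → InDimLT R n (M ⧸ N) → InDimLT R n M) :=
  ⟨fun _ _ _ N => InDimLT.of_injective N.subtype N.injective_subtype,
    fun _ _ _ N => InDimLT.of_surjective N.mkQ N.mkQ_surjective,
    fun _ _ _ N => InDimLT.of_exact (LinearMap.exact_subtype_mkQ N) N.mkQ_surjective⟩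
end

section
/- Let R be a commutative Noetherian ring, a and b ideals with b ⊆ a, M a finitely generated R-module, and r a non-negative integer with r < f_a^b(M). Then there exists n ∈ ℕ with b^n H^r_a(M) = 0, and consequently H^r_a(M) ≅ Hom_R(R/b^n, H^r_a(M)). -/
open CategoryTheory

universe u

/-- If an ideal annihilates a module, the module is isomorphic to
`Hom(R/I, N)`. -/
noncomputable def equivHomOfSmulTopEqBot {R : Type u} [CommRing R] (I : Ideal R)
    {N : Type u} [AddCommGroup N] [Module R N]
    (h : I • (⊤ : Submodule R N) = ⊥) :
    N ≃ₗ[R] ((R ⧸ I) →ₗ[R] N) := by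
  have hann : ∀ (r : R), r ∈ I → ∀ x : N, r • x = 0 := by
    intro r hr x
    have : r • x ∈ I • (⊤ : Submodule R N) :=
      Submodule.smul_mem_smul hr Submodule.mem_top
    simpa [h] using this
  refine LinearEquiv.ofLinear
    { toFun := fun x => I.liftQ (LinearMap.toSpanSingleton R N x)
        (fun r hr => by simpa using hann r hr x)
      map_add' := by
        intro x y
        ext
        show (1 : R) • (x + y) = (1 : R) • x + (1 : R) • y
        simp
      map_smul' := by
        intro c x
        ext
        show (1 : R) • (c • x) = c • ((1 : R) • x)
        simp }
    (LinearMap.applyₗ (Submodule.Quotient.mk (1 : R)))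
    ?_ ?_
  · ext φ ⟨r⟩
    simpa using (φ.map_smul r (Submodule.Quotient.mk 1)).symm.trans
      (by congr 1; simp [Submodule.Quotient.mk_smul, smul_eq_mul, mul_one])
  · ext x
    exact one_smul R x

/-- if `r < f_a^b(M)` then `b^n H^r_a(M) = 0` for some `n`, and
consequently `H^r_a(M) ≅ Hom_R(R/b^n, H^r_a(M))`. -/
theorem exists_pow_ann_and_iso_hom (R : Type u) [CommRing R] [IsNoetherianRing R]
    (a b : Ideal R) (hba : b ≤ a)
    (M : Type u) [AddCommGroup M] [Module R M] [Module.Finite R M]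
    (r : ℕ) (hr : (r : ℕ∞) < fab R a b M) :
    ∃ n : ℕ, b ^ n • (⊤ : Submodule R (locH R a r M)) = ⊥ ∧
      Nonempty ((locH R a r M) ≃ₗ[R] ((R ⧸ b ^ n) →ₗ[R] (locH R a r M))) := by
  have hmem : r ∉ {i : ℕ | ∀ n : ℕ, b ^ n • (⊤ : Submodule R (locH R a i M)) ≠ ⊥} := by
    intro hm
    have : fab R a b M ≤ (r : ℕ∞) := csInf_le (OrderBot.bddBelow _) ⟨r, hm, rfl⟩
    exact absurd this (not_le.mpr hr)
  simp only [Set.mem_setOf_eq, not_forall, not_not] at hmem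
  obtain ⟨n, hn⟩ := hmem
  exact ⟨n, hn, ⟨equivHomOfSmulTopEqBot _ hn⟩⟩
end
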